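/- arXiv:math/0509553 — 2 statements merged into one kernel-verified Lean document; each statement's English description precedes it below -/
import Mathlib

section
/- Change of variables for the positive side: ∫₀^∞ n([φ₊(s),∞)) ds = ∫_{(0,∞)} (1 + μ̄(s) − μ̄(G_μ⁻¹(D_μ(s))))⁻¹ dμ(s) (equality in [0,∞]). -/
open MeasureTheory Filter
open scoped ENNReal Topology Classical

/-- Topological support of a Borel measure on ℝ. -/
def measSupport (μ : MeasureTheory.Measure ℝ) : Set ℝ :=
  {x | ∀ U : Set ℝ, IsOpen U → x ∈ U → 0 < μ U}

/-- `D_μ(y) = ∫_{[0,y]} n([s,∞))⁻¹ dμ(s)` for `y ≥ 0` (equal to `0` for `y < 0`). -/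
noncomputable def Dmu (μ n : MeasureTheory.Measure ℝ) (y : ℝ) : ℝ≥0∞ :=
  ∫⁻ s in Set.Icc (0 : ℝ) y, (n (Set.Ici s))⁻¹ ∂μ

/-- `G_μ(x) = ∫_{[x,0]} n((−∞,s])⁻¹ dμ(s)` for `x ≤ 0` (equal to `0` for `x > 0`). -/
noncomputable def Gmu (μ n : MeasureTheory.Measure ℝ) (x : ℝ) : ℝ≥0∞ :=
  ∫⁻ s in Set.Icc x (0 : ℝ), (n (Set.Iic s))⁻¹ ∂μ

/-- The set `{y ≥ 0 : D_μ(y) > v}`; its infimum is the right-continuous inverse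
`D_μ⁻¹(v)`, with `D_μ⁻¹(v) = ∞` when the set is empty. -/
def DinvSet (μ n : MeasureTheory.Measure ℝ) (v : ℝ≥0∞) : Set ℝ :=
  {y : ℝ | 0 ≤ y ∧ v < Dmu μ n y}

/-- The set `{x ≤ 0 : G_μ(x) > v}`; its supremum is the right-continuous inverse
`G_μ⁻¹(v)`, with `G_μ⁻¹(v) = −∞` when the set is empty. -/
def GinvSet (μ n : MeasureTheory.Measure ℝ) (v : ℝ≥0∞) : Set ℝ :=
  {x : ℝ | x ≤ 0 ∧ v < Gmu μ n x}

/-- `μ̄(D_μ⁻¹(v))`, with the convention `μ̄(∞) = 0`. -/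
noncomputable def mubarDinv (μ n : MeasureTheory.Measure ℝ) (v : ℝ≥0∞) : ℝ :=
  if (DinvSet μ n v).Nonempty then (μ (Set.Ici (sInf (DinvSet μ n v)))).toReal else 0

/-- `μ̄(G_μ⁻¹(v))`, with the convention `μ̄(−∞) = 1`. -/
noncomputable def mubarGinv (μ n : MeasureTheory.Measure ℝ) (v : ℝ≥0∞) : ℝ :=
  if (GinvSet μ n v).Nonempty then (μ (Set.Ici (sSup (GinvSet μ n v)))).toReal else 1

/-- `n([D_μ⁻¹(v),∞))`, with the convention that it is `0` when `D_μ⁻¹(v) = ∞`. -/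
noncomputable def nDinv (μ n : MeasureTheory.Measure ℝ) (v : ℝ≥0∞) : ℝ≥0∞ :=
  if (DinvSet μ n v).Nonempty then n (Set.Ici (sInf (DinvSet μ n v))) else 0

/-- `n((−∞,G_μ⁻¹(v)])`, with the convention that it is `0` when `G_μ⁻¹(v) = −∞`. -/
noncomputable def nGinv (μ n : MeasureTheory.Measure ℝ) (v : ℝ≥0∞) : ℝ≥0∞ :=
  if (GinvSet μ n v).Nonempty then n (Set.Iic (sSup (GinvSet μ n v))) else 0

/-- The integrand `[n([s,∞)) · (1 + μ̄(s) − μ̄(G_μ⁻¹(D_μ(s))))]⁻¹` of `ψ₊`. -/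
noncomputable def psiPlusIntegrand (μ n : MeasureTheory.Measure ℝ) (s : ℝ) : ℝ≥0∞ :=
  (n (Set.Ici s) *
    ENNReal.ofReal (1 + (μ (Set.Ici s)).toReal - mubarGinv μ n (Dmu μ n s)))⁻¹

/-- `ψ₊(y) = ∫_{[0,y]} [n([s,∞)) · (1 + μ̄(s) − μ̄(G_μ⁻¹(D_μ(s))))]⁻¹ dμ(s)`. -/
noncomputable def psiPlus (μ n : MeasureTheory.Measure ℝ) (y : ℝ) : ℝ≥0∞ :=
  ∫⁻ s in Set.Icc (0 : ℝ) y, psiPlusIntegrand μ n s ∂μ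

/-- The integrand `[n((−∞,s]) · (1 + μ̄(D_μ⁻¹(G_μ(s))) − μ̄(s))]⁻¹` of `ψ₋`. -/
noncomputable def psiMinusIntegrand (μ n : MeasureTheory.Measure ℝ) (s : ℝ) : ℝ≥0∞ :=
  (n (Set.Iic s) *
    ENNReal.ofReal (1 + mubarDinv μ n (Gmu μ n s) - (μ (Set.Ici s)).toReal))⁻¹

/-- `ψ₋(z) = ∫_{[−z,0]} [n((−∞,s]) · (1 + μ̄(D_μ⁻¹(G_μ(s))) − μ̄(s))]⁻¹ dμ(s)`. -/
noncomputable def psiMinus (μ n : MeasureTheory.Measure ℝ) (z : ℝ) : ℝ≥0∞ :=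
  ∫⁻ s in Set.Icc (-z) (0 : ℝ), psiMinusIntegrand μ n s ∂μ

/-- The set `{y ≥ 0 : ψ₊(y) ≥ l}` whose infimum is the left-continuous inverse `φ₊(l)`. -/
def phiPlusSet (μ n : MeasureTheory.Measure ℝ) (l : ℝ) : Set ℝ :=
  {y : ℝ | 0 ≤ y ∧ ENNReal.ofReal l ≤ psiPlus μ n y}

/-- The set `{z ≥ 0 : ψ₋(z) ≥ l}` whose infimum is the left-continuous inverse `φ₋(l)`. -/
def phiMinusSet (μ n : MeasureTheory.Measure ℝ) (l : ℝ) : Set ℝ :=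
  {z : ℝ | 0 ≤ z ∧ ENNReal.ofReal l ≤ psiMinus μ n z}

/-- `φ₊(l) = inf{y ≥ 0 : ψ₊(y) ≥ l}`. -/
noncomputable def phiPlus (μ n : MeasureTheory.Measure ℝ) (l : ℝ) : ℝ :=
  sInf (phiPlusSet μ n l)

/-- `φ₋(l) = inf{z ≥ 0 : ψ₋(z) ≥ l}`. -/
noncomputable def phiMinus (μ n : MeasureTheory.Measure ℝ) (l : ℝ) : ℝ :=
  sInf (phiMinusSet μ n l)

/-- `n([φ₊(l),∞))`, with the convention that it is `0` when `φ₊(l) = inf ∅ = ∞`. -/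
noncomputable def nPhiPlus (μ n : MeasureTheory.Measure ℝ) (l : ℝ) : ℝ≥0∞ :=
  if (phiPlusSet μ n l).Nonempty then n (Set.Ici (phiPlus μ n l)) else 0

/-- `n((−∞,−φ₋(l)])`, with the convention that it is `0` when `φ₋(l) = inf ∅ = ∞`. -/
noncomputable def nPhiMinus (μ n : MeasureTheory.Measure ℝ) (l : ℝ) : ℝ≥0∞ :=
  if (phiMinusSet μ n l).Nonempty then n (Set.Iic (-(phiMinus μ n l))) else 0

/-- `∫₀^L [n((−∞,−φ₋(s)]) + n([φ₊(s),∞))] ds` for an upper limit `L ∈ [0,∞]`. -/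
noncomputable def cutInt (μ n : MeasureTheory.Measure ℝ) (L : ℝ≥0∞) : ℝ≥0∞ :=
  ∫⁻ s in {s : ℝ | 0 < s ∧ ENNReal.ofReal s < L},
    (nPhiMinus μ n s + nPhiPlus μ n s)

/-- `exp(−a)` for `a ∈ [0,∞]`, with `exp(−∞) = 0`. -/
noncomputable def expNegE (a : ℝ≥0∞) : ℝ :=
  if a = ⊤ then 0 else Real.exp (-a.toReal)

/-- `ρ(l) = exp(−∫₀^l [n((−∞,−φ₋(s)]) + n([φ₊(s),∞))] ds)`. -/
noncomputable def rho (μ n : MeasureTheory.Measure ℝ) (l : ℝ) : ℝ≥0∞ :=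
  ENNReal.ofReal (expNegE (cutInt μ n (ENNReal.ofReal l)))

/-! To the right of any point that has `μ`-mass to its right, `n([s,∞))` and `μ̄(s)` stay
positive, so the density of `ψ₊` is locally bounded there and `ψ₊` is right-continuous. Hence
`{t : ψ₊(t) ≥ s} = [φ₊(s),∞)`, and the left side is `∫₀^∞ n{ψ₊ ≥ s} ds = ∫ ψ₊ dn` by the
layer-cake formula. Writing `ψ₊(t) = ∫_{[0,t]} f dμ` and exchanging the integrals gives
`∫ f(y) n([y,∞)) dμ(y)`, and the factor `n([y,∞))`, positive and finite for `μ`-a.e. `y > 0`,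
cancels against the one in `f`. -/

open Set

lemma volume_setOf_ofReal_le_inter_Ioi (c : ℝ≥0∞) :
    volume ({s : ℝ | ENNReal.ofReal s ≤ c} ∩ Ioi 0) = c := by
  rcases eq_or_ne c ∞ with rfl | hc
  · simp
  · have : {s : ℝ | ENNReal.ofReal s ≤ c} ∩ Ioi 0 = Ioc 0 c.toReal := by
      ext s
      simp only [mem_inter_iff, mem_ofPred_eq, mem_Ioi, mem_Ioc,
        ENNReal.ofReal_le_iff_le_toReal hc]
      tauto
    rw [this, Real.volume_Ioc, sub_zero, ENNReal.ofReal_toReal hc]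

lemma lintegral_eq_lintegral_meas_ofReal_le {α : Type*} [MeasurableSpace α] (ν : Measure α)
    [SFinite ν] {f : α → ℝ≥0∞} (hf : Measurable f) :
    ∫⁻ a, f a ∂ν = ∫⁻ s in Ioi 0, ν {a | ENNReal.ofReal s ≤ f a} := by
  have hE : MeasurableSet {p : ℝ × α | ENNReal.ofReal p.1 ≤ f p.2} :=
    measurableSet_le (ENNReal.measurable_ofReal.comp measurable_fst) (hf.comp measurable_snd)
  calc ∫⁻ a, f a ∂ν
      = ∫⁻ a, volume.restrict (Ioi 0) {s : ℝ | ENNReal.ofReal s ≤ f a} ∂ν := by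
        simp only [Measure.restrict_apply' measurableSet_Ioi, volume_setOf_ofReal_le_inter_Ioi]
    _ = (volume.restrict (Ioi 0)).prod ν {p : ℝ × α | ENNReal.ofReal p.1 ≤ f p.2} :=
        (Measure.prod_apply_symm hE).symm
    _ = ∫⁻ s in Ioi 0, ν {a | ENNReal.ofReal s ≤ f a} := Measure.prod_apply hE

lemma lintegral_measure_Icc_eq_setLIntegral_Ici (ν ρ : Measure ℝ) [SFinite ν] [SFinite ρ] (a : ℝ) :
    ∫⁻ t, ρ (Icc a t) ∂ν = ∫⁻ y in Ici a, ν (Ici y) ∂ρ := by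
  have hE : MeasurableSet {p : ℝ × ℝ | a ≤ p.2 ∧ p.2 ≤ p.1} :=
    (measurableSet_le measurable_const measurable_snd).inter
      (measurableSet_le measurable_snd measurable_fst)
  calc ∫⁻ t, ρ (Icc a t) ∂ν = ν.prod ρ {p : ℝ × ℝ | a ≤ p.2 ∧ p.2 ≤ p.1} :=
        (Measure.prod_apply hE).symm
    _ = ∫⁻ y, (Ici a).indicator (fun y ↦ ν (Ici y)) y ∂ρ := by
        rw [Measure.prod_apply_symm hE]
        refine lintegral_congr fun y ↦ ?_
        by_cases hy : a ≤ y <;> simp [hy, Set.indicator, Ici]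
    _ = ∫⁻ y in Ici a, ν (Ici y) ∂ρ := lintegral_indicator measurableSet_Ici _

lemma tendsto_measure_Icc_nhdsGT (ρ : Measure ℝ) {a t : ℝ} (h : ∃ b > t, ρ (Icc a b) ≠ ∞) :
    Tendsto (fun t' ↦ ρ (Icc a t')) (𝓝[>] t) (𝓝 (ρ (Icc a t))) := by
  have hinter : ⋂ r > t, Icc a r = Icc a t := by
    ext x
    simp only [mem_iInter, mem_Icc, gt_iff_lt]
    exact ⟨fun hx ↦ ⟨(hx (t + 1) (by linarith)).1,
        le_of_forall_gt_imp_ge_of_dense fun r hr ↦ (hx r hr).2⟩,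
      fun hx r hr ↦ ⟨hx.1, hx.2.trans hr.le⟩⟩
  have := tendsto_measure_biInter_gt (μ := ρ) (fun r _ ↦ nullMeasurableSet_Icc)
    (fun i j _ hij ↦ Icc_subset_Icc_right hij) h
  rwa [hinter] at this

lemma sigmaFinite_restrict_Ioi_zero (n : Measure ℝ) (hfin : ∀ s > 0, n (Ici s) < ∞) :
    SigmaFinite (n.restrict (Ioi 0)) := by
  refine Measure.sigmaFinite_of_countable
    (S := insert (Iic 0) (range fun k : ℕ ↦ Ici (1 / (k + 1 : ℝ))))
    ((countable_range _).insert _) ?_ ?_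
  · rintro s (rfl | ⟨k, rfl⟩)
    · simp [Measure.restrict_apply' measurableSet_Ioi, Iic_inter_Ioi]
    · exact (Measure.restrict_apply_le _ _).trans_lt (hfin _ Nat.one_div_pos_of_nat)
  · refine eq_univ_of_forall fun x ↦ ?_
    rcases le_or_gt x 0 with hx | hx
    · exact ⟨Iic 0, mem_insert _ _, hx⟩
    · obtain ⟨k, hk⟩ := exists_nat_one_div_lt hx
      exact ⟨_, mem_insert_of_mem _ ⟨k, rfl⟩, mem_Ici.mpr hk.le⟩

lemma measSupport_eq_support (μ : Measure ℝ) : measSupport μ = μ.support := by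
  rw [Measure.support_eq_forall_isOpen]
  ext x
  exact forall_congr' fun U ↦ ⟨fun h hx hU ↦ h hU hx, fun h hU hx ↦ h hx hU⟩

section PsiPlus

variable {μ n : Measure ℝ}

lemma monotone_Dmu : Monotone (Dmu μ n) :=
  fun _ _ h ↦ lintegral_mono_set (Icc_subset_Icc_right h)

lemma mubarGinv_le_one [IsProbabilityMeasure μ] (v : ℝ≥0∞) : mubarGinv μ n v ≤ 1 := by
  unfold mubarGinv
  split_ifs
  · exact ENNReal.toReal_le_of_le_ofReal zero_le_one (by simpa using prob_le_one)
  · exact le_rfl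

lemma monotone_mubarGinv [IsProbabilityMeasure μ] : Monotone (mubarGinv μ n) := by
  intro v v' hv
  by_cases hne : (GinvSet μ n v').Nonempty
  · have hsub : GinvSet μ n v' ⊆ GinvSet μ n v := fun x hx ↦ ⟨hx.1, hv.trans_lt hx.2⟩
    have hsup : sSup (GinvSet μ n v') ≤ sSup (GinvSet μ n v) :=
      csSup_le_csSup ⟨0, fun x hx ↦ hx.1⟩ hne hsub
    simp only [mubarGinv, if_pos hne, if_pos (hne.mono hsub)]
    exact ENNReal.toReal_mono (measure_ne_top μ _) (measure_mono (Ici_subset_Ici.mpr hsup))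
  · simpa [mubarGinv, hne] using mubarGinv_le_one v

lemma measurable_psiPlusIntegrand [IsProbabilityMeasure μ] :
    Measurable (psiPlusIntegrand μ n) := by
  have hn : Antitone fun s : ℝ ↦ n (Ici s) := fun _ _ h ↦ measure_mono (Ici_subset_Ici.mpr h)
  have hμ : Antitone fun s : ℝ ↦ (μ (Ici s)).toReal := fun _ _ h ↦
    ENNReal.toReal_mono (measure_ne_top μ _) (measure_mono (Ici_subset_Ici.mpr h))
  have hG : Monotone fun s ↦ mubarGinv μ n (Dmu μ n s) := monotone_mubarGinv.comp monotone_Dmu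
  exact (hn.measurable.mul ((measurable_const.add hμ.measurable).sub
    hG.measurable).ennreal_ofReal).inv

lemma psiPlusIntegrand_le [IsProbabilityMeasure μ] (s : ℝ) :
    psiPlusIntegrand μ n s ≤ (n (Ici s) * μ (Ici s))⁻¹ := by
  refine ENNReal.inv_le_inv.mpr (mul_le_mul_right ?_ _)
  refine (ENNReal.ofReal_toReal (measure_ne_top μ _)).symm.trans_le (ENNReal.ofReal_le_ofReal ?_)
  linarith [mubarGinv_le_one (μ := μ) (n := n) (Dmu μ n s)]

lemma psiPlusIntegrand_mul_measure_Ici {s : ℝ} (h0 : n (Ici s) ≠ 0) (htop : n (Ici s) ≠ ∞) :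
    psiPlusIntegrand μ n s * n (Ici s) =
      (ENNReal.ofReal (1 + (μ (Ici s)).toReal - mubarGinv μ n (Dmu μ n s)))⁻¹ := by
  rw [psiPlusIntegrand, ENNReal.mul_inv (Or.inl h0) (Or.inl htop), mul_right_comm,
    ENNReal.inv_mul_cancel h0 htop, one_mul]

lemma psiPlus_eq_withDensity (t : ℝ) :
    psiPlus μ n t = μ.withDensity (psiPlusIntegrand μ n) (Icc 0 t) :=
  (withDensity_apply _ measurableSet_Icc).symm

lemma monotone_psiPlus : Monotone (psiPlus μ n) :=
  fun _ _ h ↦ lintegral_mono_set (Icc_subset_Icc_right h)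

lemma psiPlus_of_nonpos (h0 : μ {0} = 0) {t : ℝ} (ht : t ≤ 0) : psiPlus μ n t = 0 := by
  have hnull : μ (Icc 0 t) = 0 := measure_mono_null (fun x hx ↦ le_antisymm (hx.2.trans ht) hx.1) h0
  rw [psiPlus, Measure.restrict_eq_zero.mpr hnull, lintegral_zero_measure]

lemma setOf_ofReal_le_psiPlus_subset_Ioi (h0 : μ {0} = 0) {s : ℝ} (hs : 0 < s) :
    {t | ENNReal.ofReal s ≤ psiPlus μ n t} ⊆ Ioi 0 := by
  intro t ht
  by_contra hpos
  rw [mem_ofPred_eq, psiPlus_of_nonpos h0 (not_lt.mp hpos), nonpos_iff_eq_zero,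
    ENNReal.ofReal_eq_zero] at ht
  linarith

lemma phiPlusSet_eq (h0 : μ {0} = 0) {s : ℝ} (hs : 0 < s) :
    phiPlusSet μ n s = {t | ENNReal.ofReal s ≤ psiPlus μ n t} :=
  Subset.antisymm (fun _ ht ↦ ht.2)
    fun _ ht ↦ ⟨(setOf_ofReal_le_psiPlus_subset_Ioi h0 hs ht).le, ht⟩

lemma exists_gt_withDensity_psiPlusIntegrand_Ioc_ne_top [IsProbabilityMeasure μ]
    (hsupp : ∀ x ∈ μ.support, 0 < n (Ici x)) (t : ℝ) :
    ∃ b > t, μ.withDensity (psiPlusIntegrand μ n) (Ioc t b) ≠ ∞ := by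
  by_cases hμt : μ (Ioi t) = 0
  · refine ⟨t + 1, by linarith, ?_⟩
    rw [withDensity_apply _ measurableSet_Ioc,
      Measure.restrict_eq_zero.mpr (measure_mono_null Ioc_subset_Ioi_self hμt)]
    simp
  obtain ⟨x, hxt, hx⟩ := Measure.nonempty_inter_support_of_pos (pos_iff_ne_zero.mpr hμt)
  obtain ⟨m, htm, hmx⟩ := exists_between (mem_Ioi.mp hxt)
  have hμm : μ (Ici m) ≠ 0 :=
    (((Measure.mem_support_iff_forall x).mp hx _ (Ioi_mem_nhds hmx)).trans_le
      (measure_mono Ioi_subset_Ici_self)).ne'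
  have hnm : n (Ici m) ≠ 0 :=
    ((hsupp x hx).trans_le (measure_mono (Ici_subset_Ici.mpr hmx.le))).ne'
  -- The bound `(n [s,∞) * μ [s,∞))⁻¹` on the density is antitone in `s`.
  refine ⟨m, htm, ne_top_of_le_ne_top (ENNReal.mul_ne_top
    (ENNReal.inv_ne_top.mpr (mul_ne_zero hnm hμm)) (measure_ne_top μ (Ioc t m))) ?_⟩
  calc μ.withDensity (psiPlusIntegrand μ n) (Ioc t m)
      ≤ ∫⁻ _ in Ioc t m, (n (Ici m) * μ (Ici m))⁻¹ ∂μ := by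
        rw [withDensity_apply _ measurableSet_Ioc]
        refine setLIntegral_mono' measurableSet_Ioc fun s hs ↦ (psiPlusIntegrand_le s).trans ?_
        exact ENNReal.inv_le_inv.mpr (mul_le_mul' (measure_mono (Ici_subset_Ici.mpr hs.2))
          (measure_mono (Ici_subset_Ici.mpr hs.2)))
    _ = (n (Ici m) * μ (Ici m))⁻¹ * μ (Ioc t m) := setLIntegral_const _ _

lemma le_psiPlus_of_forall_gt [IsProbabilityMeasure μ] (hsupp : ∀ x ∈ μ.support, 0 < n (Ici x))
    {t : ℝ} {c : ℝ≥0∞} (hc : ∀ t' > t, c ≤ psiPlus μ n t') : c ≤ psiPlus μ n t := by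
  rcases eq_or_ne (psiPlus μ n t) ∞ with htop | htop
  · exact htop ▸ le_top
  obtain ⟨b, htb, hb⟩ := exists_gt_withDensity_psiPlusIntegrand_Ioc_ne_top hsupp t
  set ρ := μ.withDensity (psiPlusIntegrand μ n)
  have hfin : ρ (Icc 0 b) ≠ ∞ := by
    refine ne_top_of_le_ne_top (ENNReal.add_ne_top.mpr ⟨?_, hb⟩)
      ((measure_mono (Icc_subset_Icc_union_Ioc (b := t))).trans (measure_union_le _ _))
    rwa [← psiPlus_eq_withDensity]
  have hlim := tendsto_measure_Icc_nhdsGT ρ ⟨b, htb, hfin⟩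
  simp only [ρ, ← psiPlus_eq_withDensity] at hlim
  exact ge_of_tendsto hlim (eventually_nhdsWithin_of_forall hc)

lemma nPhiPlus_eq_measure_phiPlusSet [IsProbabilityMeasure μ]
    (hsupp : ∀ x ∈ μ.support, 0 < n (Ici x)) (s : ℝ) :
    nPhiPlus μ n s = n (phiPlusSet μ n s) := by
  unfold nPhiPlus
  split_ifs with hne
  · have hbdd : BddBelow (phiPlusSet μ n s) := ⟨0, fun _ hy ↦ hy.1⟩
    have hmem : phiPlus μ n s ∈ phiPlusSet μ n s := by
      refine ⟨le_csInf hne fun _ hy ↦ hy.1, le_psiPlus_of_forall_gt hsupp fun t' ht' ↦ ?_⟩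
      obtain ⟨y, hy, hyt⟩ := (csInf_lt_iff hbdd hne).mp ht'
      exact hy.2.trans (monotone_psiPlus hyt.le)
    congr 1
    ext t
    exact ⟨fun ht ↦ ⟨hmem.1.trans ht, hmem.2.trans (monotone_psiPlus ht)⟩,
      fun ht ↦ csInf_le hbdd ht⟩
  · rw [not_nonempty_iff_eq_empty.mp hne, measure_empty]

end PsiPlus

theorem changeOfVariablesPositiveSide_general
    (μ n : MeasureTheory.Measure ℝ) [MeasureTheory.IsProbabilityMeasure μ]
    (hatomless : ∀ x : ℝ, μ {x} = 0)
    (hnfin : ∀ s : ℝ, 0 < s → n (Set.Ici s) < ⊤ ∧ n (Set.Iic (-s)) < ⊤)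
    (hnsupp : ∀ x ∈ measSupport μ, 0 < n (Set.Iic x) ∧ 0 < n (Set.Ici x))
    :
    (∫⁻ s in Set.Ioi (0 : ℝ), nPhiPlus μ n s) =
      ∫⁻ s in Set.Ioi (0 : ℝ),
        (ENNReal.ofReal (1 + (μ (Set.Ici s)).toReal - mubarGinv μ n (Dmu μ n s)))⁻¹ ∂μ := by
  have hsupp : ∀ x ∈ μ.support, 0 < n (Ici x) :=
    fun x hx ↦ (hnsupp x (measSupport_eq_support μ ▸ hx)).2
  have := sigmaFinite_restrict_Ioi_zero n fun s hs ↦ (hnfin s hs).1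
  set ν := n.restrict (Ioi 0)
  set ρ := μ.withDensity (psiPlusIntegrand μ n)
  have hν : Measurable fun y : ℝ ↦ ν (Ici y) :=
    Antitone.measurable fun _ _ h ↦ measure_mono (Ici_subset_Ici.mpr h)
  calc ∫⁻ s in Ioi 0, nPhiPlus μ n s
      = ∫⁻ s in Ioi 0, ν {t | ENNReal.ofReal s ≤ psiPlus μ n t} :=
        setLIntegral_congr_fun measurableSet_Ioi fun s hs ↦ by
          rw [nPhiPlus_eq_measure_phiPlusSet hsupp, phiPlusSet_eq (hatomless 0) hs,
            Measure.restrict_eq_self _ (setOf_ofReal_le_psiPlus_subset_Ioi (hatomless 0) hs)]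
    _ = ∫⁻ t, ρ (Icc 0 t) ∂ν := by
        simp_rw [ρ, ← psiPlus_eq_withDensity]
        exact (lintegral_eq_lintegral_meas_ofReal_le ν monotone_psiPlus.measurable).symm
    _ = ∫⁻ y in Ici 0, psiPlusIntegrand μ n y * ν (Ici y) ∂μ := by
        rw [lintegral_measure_Icc_eq_setLIntegral_Ici]
        exact setLIntegral_withDensity_eq_setLIntegral_mul _ measurable_psiPlusIntegrand hν
          measurableSet_Ici
    _ = ∫⁻ y in Ioi 0, psiPlusIntegrand μ n y * ν (Ici y) ∂μ :=
        setLIntegral_congr (Ioi_ae_eq_Ici' (hatomless 0)).symm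
    _ = _ := by
        refine setLIntegral_congr_fun_ae measurableSet_Ioi ?_
        filter_upwards [Measure.support_mem_ae] with y hy hy0
        rw [Measure.restrict_apply measurableSet_Ici, inter_eq_left.mpr (Ici_subset_Ioi.mpr hy0),
          psiPlusIntegrand_mul_measure_Ici (hsupp y hy).ne' (hnfin y hy0).1.ne]

/-- Change of variables for the positive side:
`∫₀^∞ n([φ₊(s),∞)) ds = ∫_{(0,∞)} (1 + μ̄(s) − μ̄(G_μ⁻¹(D_μ(s))))⁻¹ dμ(s)`
(equality in `[0,∞]`). -/
theorem changeOfVariablesPositiveSide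
    (μ n : MeasureTheory.Measure ℝ) [MeasureTheory.IsProbabilityMeasure μ]
    (hatomless : ∀ x : ℝ, μ {x} = 0)
    (hneg : 0 < μ (Set.Iio (0 : ℝ))) (hpos : 0 < μ (Set.Ioi (0 : ℝ)))
    (hnfin : ∀ s : ℝ, 0 < s → n (Set.Ici s) < ⊤ ∧ n (Set.Iic (-s)) < ⊤)
    (hnsupp : ∀ x ∈ measSupport μ, 0 < n (Set.Iic x) ∧ 0 < n (Set.Ici x))
    (hcompat : (⨆ y : ℝ, Dmu μ n y) = (⨆ x : ℝ, Gmu μ n x))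
    :
    (∫⁻ s in Set.Ioi (0 : ℝ), nPhiPlus μ n s) =
      ∫⁻ s in Set.Ioi (0 : ℝ),
        (ENNReal.ofReal (1 + (μ (Set.Ici s)).toReal - mubarGinv μ n (Dmu μ n s)))⁻¹ ∂μ :=
  changeOfVariablesPositiveSide_general μ n hatomless hnfin hnsupp
end

section
/- Change of variables for the negative side: ∫₀^∞ n((−∞,−φ₋(s)]) ds = ∫_{(−∞,0)} (1 + μ̄(D_μ⁻¹(G_μ(s))) − μ̄(s))⁻¹ dμ(s) (equality in [0,∞]). -/
open MeasureTheory Filter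
open scoped ENNReal Topology Classical

/-!
The set `{l : φ₋(l) ≤ -t}` is `{l : l ≤ ψ₋(-t+)}`, with `ψ₋(-t+)` the right limit of the
monotone function `ψ₋` at `-t`, so by the layer cake formula the left side is
`∫_{t ≤ 0} ψ₋(-t+) dn(t)`. Tonelli turns `∫_{t ≤ 0} ψ₋(-t) dn(t)` into
`∫_{s ≤ 0} n((-∞,s]) · [n((-∞,s]) · (1 + μ̄(D_μ⁻¹(G_μ(s))) − μ̄(s))]⁻¹ dμ(s)`,
and on the support of `μ` in `(-∞,0)` the factor `n((-∞,s])` is positive and finite,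
so it cancels.
-/

open Set

lemma measure_compl_measSupport (μ : Measure ℝ) : μ (measSupport μ)ᶜ = 0 := by
  rw [measSupport_eq_support]
  exact Measure.measure_compl_support

lemma volume_restrict_Ioi_setOf_ofReal_le (a : ℝ≥0∞) :
    volume.restrict (Ioi (0 : ℝ)) {l | ENNReal.ofReal l ≤ a} = a := by
  rw [Measure.restrict_apply' measurableSet_Ioi]
  rcases eq_or_ne a ∞ with rfl | ha
  · simp
  · have : {l : ℝ | ENNReal.ofReal l ≤ a} ∩ Ioi 0 = Ioc 0 a.toReal := by
      ext l
      simp [ENNReal.ofReal_le_iff_le_toReal ha, and_comm]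
    rw [this, Real.volume_Ioc, sub_zero, ENNReal.ofReal_toReal ha]

lemma lintegral_eq_lintegral_Ioi_measure_ofReal_le {α : Type*} [MeasurableSpace α]
    (m : Measure α) [SFinite m] {g : α → ℝ≥0∞} (hg : Measurable g) :
    ∫⁻ t, g t ∂m = ∫⁻ l in Ioi 0, m {t | ENNReal.ofReal l ≤ g t} := by
  have hS : MeasurableSet {p : ℝ × α | ENNReal.ofReal p.1 ≤ g p.2} :=
    measurableSet_le (ENNReal.measurable_ofReal.comp measurable_fst) (hg.comp measurable_snd)
  calc ∫⁻ t, g t ∂m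
      = ∫⁻ t, volume.restrict (Ioi 0) {l | ENNReal.ofReal l ≤ g t} ∂m := by
        simp only [volume_restrict_Ioi_setOf_ofReal_le]
    _ = (volume.restrict (Ioi 0)).prod m {p | ENNReal.ofReal p.1 ≤ g p.2} :=
        (Measure.prod_apply_symm hS).symm
    _ = ∫⁻ l in Ioi 0, m {t | ENNReal.ofReal l ≤ g t} := Measure.prod_apply hS

lemma lintegral_measure_Ici_eq_lintegral_measure_Iic (m ν : Measure ℝ) [SFinite m] [SFinite ν] :
    ∫⁻ t, ν (Ici t) ∂m = ∫⁻ s, m (Iic s) ∂ν := by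
  have hS : MeasurableSet {p : ℝ × ℝ | p.1 ≤ p.2} := measurableSet_le measurable_fst measurable_snd
  exact (Measure.prod_apply hS).symm.trans (Measure.prod_apply_symm hS)

lemma sigmaFinite_restrict_Iio_zero {n : Measure ℝ} (hn : ∀ s < 0, n (Iic s) < ∞) :
    SigmaFinite (n.restrict (Iio 0)) := by
  refine Measure.sigmaFinite_of_countable
    (S := insert (Ici 0) (range fun k : ℕ => Iic (-(1 / ((k : ℝ) + 1)))))
    ((countable_range _).insert _) ?_ ?_
  · rintro _ (rfl | ⟨k, rfl⟩)
    · simp [Measure.restrict_apply' measurableSet_Iio, Ici_inter_Iio]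
    · exact (Measure.restrict_apply_le _ _).trans_lt (hn _ (by simp; positivity))
  · refine eq_univ_of_forall fun x => ?_
    rcases le_or_gt 0 x with hx | hx
    · exact ⟨Ici 0, mem_insert _ _, hx⟩
    · obtain ⟨k, hk⟩ := exists_nat_one_div_lt (neg_pos.2 hx)
      exact ⟨_, mem_insert_of_mem _ ⟨k, rfl⟩, show x ≤ _ by linarith⟩

lemma sFinite_restrict_Iic_zero {n : Measure ℝ} (hn : ∀ s < 0, n (Iic s) < ∞) :
    SFinite (n.restrict (Iic 0)) := by
  have := sigmaFinite_restrict_Iio_zero hn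
  rw [← Iio_union_right, Measure.restrict_union (by simp) (measurableSet_singleton 0),
    Measure.restrict_singleton]
  infer_instance

section NegativeSide

variable {μ n : Measure ℝ}

lemma monotone_psiMinus : Monotone (psiMinus μ n) :=
  fun _ _ h => lintegral_mono_set (Icc_subset_Icc (neg_le_neg h) le_rfl)

lemma antitone_mubarDinv [IsFiniteMeasure μ] : Antitone (mubarDinv μ n) := by
  intro v₁ v₂ h
  have hsub : DinvSet μ n v₂ ⊆ DinvSet μ n v₁ := fun y hy => ⟨hy.1, h.trans_lt hy.2⟩
  by_cases h₂ : (DinvSet μ n v₂).Nonempty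
  · rw [mubarDinv, if_pos h₂, mubarDinv, if_pos (h₂.mono hsub)]
    refine ENNReal.toReal_mono (measure_ne_top μ _) (measure_mono (Ici_subset_Ici.2 ?_))
    exact csInf_le_csInf ⟨0, fun y hy => hy.1⟩ h₂ hsub
  · rw [mubarDinv, if_neg h₂, mubarDinv]
    split_ifs
    exacts [ENNReal.toReal_nonneg, le_rfl]

lemma measurable_psiMinusIntegrand [IsFiniteMeasure μ] : Measurable (psiMinusIntegrand μ n) := by
  have hn : Monotone fun s : ℝ => n (Iic s) := fun _ _ h => measure_mono (Iic_subset_Iic.2 h)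
  have hμ : Antitone fun s : ℝ => (μ (Ici s)).toReal :=
    fun _ _ h => ENNReal.toReal_mono (measure_ne_top μ _) (measure_mono (Ici_subset_Ici.2 h))
  have hG : Antitone (Gmu μ n) := fun _ _ h => lintegral_mono_set (Icc_subset_Icc h le_rfl)
  have hDG : Monotone fun s => mubarDinv μ n (Gmu μ n s) := Antitone.comp antitone_mubarDinv hG
  exact (hn.measurable.mul (ENNReal.measurable_ofReal.comp
    ((measurable_const.add hDG.measurable).sub hμ.measurable))).inv

variable (μ n) in
noncomputable def psiMinusRightLim (t : ℝ) : ℝ≥0∞ :=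
  ⨅ z ∈ Ioi (-t), psiMinus μ n z

lemma antitone_psiMinusRightLim : Antitone (psiMinusRightLim μ n) :=
  fun _ _ h => biInf_mono fun _ hz => (neg_le_neg h).trans_lt hz

lemma psiMinus_neg_le_psiMinusRightLim (t : ℝ) : psiMinus μ n (-t) ≤ psiMinusRightLim μ n t :=
  le_iInf₂ fun _ hz => monotone_psiMinus (le_of_lt hz)

lemma mem_phiMinusSet_of_le {l z z' : ℝ} (hz : z ∈ phiMinusSet μ n l) (h : z ≤ z') :
    z' ∈ phiMinusSet μ n l :=
  ⟨hz.1.trans h, hz.2.trans (monotone_psiMinus h)⟩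

lemma nPhiMinus_eq (l : ℝ) :
    nPhiMinus μ n l = n.restrict (Iic 0) {t | ENNReal.ofReal l ≤ psiMinusRightLim μ n t} := by
  have key : ∀ t ≤ 0, ENNReal.ofReal l ≤ psiMinusRightLim μ n t ↔
      ∀ z, -t < z → z ∈ phiMinusSet μ n l := by
    intro t ht
    simp only [psiMinusRightLim, le_iInf_iff, mem_Ioi, phiMinusSet, mem_ofPred_eq]
    exact forall₂_congr fun z hz => ⟨fun h => ⟨by linarith, h⟩, And.right⟩
  rw [Measure.restrict_apply' measurableSet_Iic, nPhiMinus]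
  split_ifs with hne
  · have hφ : 0 ≤ phiMinus μ n l := Real.sInf_nonneg fun _ hz => hz.1
    congr 1
    ext t
    simp only [mem_Iic, mem_inter_iff, mem_ofPred_eq]
    constructor
    · intro ht
      refine ⟨(key t (by linarith)).2 fun z hz => ?_, by linarith⟩
      obtain ⟨w, hw, hwz⟩ := exists_lt_of_csInf_lt hne (show phiMinus μ n l < z by linarith)
      exact mem_phiMinusSet_of_le hw hwz.le
    · rintro ⟨h, ht⟩
      have hle : phiMinus μ n l ≤ -t := le_of_forall_gt_imp_ge_of_dense fun z hz =>
        csInf_le ⟨0, fun _ hw => hw.1⟩ ((key t ht).1 h z hz)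
      linarith
  · refine (measure_mono_null (fun t (⟨h, ht⟩ : t ∈ _ ∩ Iic 0) =>
      hne ⟨_, (key t ht).1 h _ (lt_add_one _)⟩) measure_empty).symm

lemma lintegral_nPhiMinus_eq [SFinite (n.restrict (Iic 0))] :
    ∫⁻ l in Ioi 0, nPhiMinus μ n l = ∫⁻ t in Iic 0, psiMinusRightLim μ n t ∂n := by
  simp only [nPhiMinus_eq]
  exact (lintegral_eq_lintegral_Ioi_measure_ofReal_le _
    antitone_psiMinusRightLim.measurable).symm

lemma psiMinusRightLim_eq_of_ne_top {t z : ℝ} (hz : -t < z) (hfin : psiMinus μ n z ≠ ∞) :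
    psiMinusRightLim μ n t = psiMinus μ n (-t) := by
  set ν := μ.withDensity (psiMinusIntegrand μ n)
  have hψ : ∀ z, psiMinus μ n z = ν (Icc (-z) 0) :=
    fun z => (withDensity_apply _ measurableSet_Icc).symm
  have hinter : ⋂ r > -t, Icc (-r) (0 : ℝ) = Icc t 0 := by
    ext x
    simp only [mem_iInter, mem_Icc]
    refine ⟨fun h => ⟨?_, (h _ (lt_add_one _)).2⟩, fun h r hr => ⟨by linarith [h.1], h.2⟩⟩
    exact neg_le_neg_iff.1 (le_of_forall_gt_imp_ge_of_dense fun r hr => by linarith [(h r hr).1])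
  have hlim := tendsto_measure_biInter_gt (μ := ν) (s := fun r => Icc (-r) (0 : ℝ)) (a := -t)
    (fun _ _ => measurableSet_Icc.nullMeasurableSet)
    (fun _ _ _ hij => Icc_subset_Icc (neg_le_neg hij) le_rfl) ⟨z, hz, by rwa [← hψ]⟩
  rw [hinter, ← neg_neg t, ← hψ, neg_neg] at hlim
  rw [psiMinusRightLim, ← sInf_image]
  refine tendsto_nhds_unique (monotone_psiMinus.tendsto_nhdsGT (-t)) ?_
  simpa only [Function.comp_def, ← hψ] using hlim

lemma psiMinus_eq_top_of_psiMinusRightLim_ne {t z : ℝ}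
    (h : psiMinusRightLim μ n t ≠ psiMinus μ n (-t)) (hz : -t < z) : psiMinus μ n z = ∞ :=
  not_not.1 fun hfin => h (psiMinusRightLim_eq_of_ne_top hz hfin)

lemma psiMinusRightLim_eq_of_psiMinus_eq_top {t : ℝ} (h : psiMinus μ n (-t) = ∞) :
    psiMinusRightLim μ n t = psiMinus μ n (-t) :=
  (top_unique (h ▸ psiMinus_neg_le_psiMinusRightLim t)).trans h.symm

lemma subsingleton_setOf_psiMinusRightLim_ne :
    {t | psiMinusRightLim μ n t ≠ psiMinus μ n (-t)}.Subsingleton := by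
  intro t₁ h₁ t₂ h₂
  by_contra hne
  wlog hlt : t₁ < t₂ generalizing t₁ t₂
  · exact this h₂ h₁ (Ne.symm hne) (lt_of_le_of_ne (not_lt.1 hlt) (Ne.symm hne))
  exact h₁ (psiMinusRightLim_eq_of_psiMinus_eq_top
    (psiMinus_eq_top_of_psiMinusRightLim_ne h₂ (neg_lt_neg hlt)))

lemma measure_Iio_eq_zero_of_measure_Iio_eq_zero (hnsupp : ∀ x ∈ measSupport μ, 0 < n (Iic x))
    {t : ℝ} (hn : n (Iio t) = 0) : μ (Iio t) = 0 :=
  measure_mono_null (fun s hs hsupp =>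
    (hnsupp s hsupp).ne' (measure_mono_null (Iic_subset_Iio.2 hs) hn)) (measure_compl_measSupport μ)

lemma psiMinus_eq_of_measure_Iio_eq_zero {t z : ℝ} (hμ : μ (Iio t) = 0) (hz : -t ≤ z) :
    psiMinus μ n z = psiMinus μ n (-t) := by
  rw [psiMinus, psiMinus, neg_neg]
  refine setLIntegral_congr
    (ae_eq_set.2 ⟨measure_mono_null ?_ hμ, measure_mono_null ?_ measure_empty⟩)
  · rintro x ⟨⟨-, hx0⟩, hx⟩
    exact lt_of_not_ge fun h => hx ⟨h, hx0⟩
  · rintro x ⟨⟨htx, hx0⟩, hx⟩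
    exact hx ⟨by linarith, hx0⟩

lemma measure_Iio_ne_zero_of_psiMinusRightLim_ne (hnsupp : ∀ x ∈ measSupport μ, 0 < n (Iic x))
    {t : ℝ} (h : psiMinusRightLim μ n t ≠ psiMinus μ n (-t)) : n (Iio t) ≠ 0 := by
  intro hn
  have htop := psiMinus_eq_top_of_psiMinusRightLim_ne h (lt_add_one (-t))
  rw [psiMinus_eq_of_measure_Iio_eq_zero (measure_Iio_eq_zero_of_measure_Iio_eq_zero hnsupp hn)
    (le_add_of_nonneg_right zero_le_one)] at htop
  exact h (psiMinusRightLim_eq_of_psiMinus_eq_top htop)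

/-- The two sides can differ only at the single jump of `ψ₋` to `∞`; if `n` charges that point,
`ψ₋` is infinite on the `n`-nonnull set to its left and both integrals are infinite. -/
lemma setLIntegral_psiMinusRightLim_eq (hnsupp : ∀ x ∈ measSupport μ, 0 < n (Iic x)) :
    ∫⁻ t in Iic 0, psiMinusRightLim μ n t ∂n = ∫⁻ t in Iic 0, psiMinus μ n (-t) ∂n := by
  set B := {t | psiMinusRightLim μ n t ≠ psiMinus μ n (-t)}
  by_cases hB : n (Iic 0 ∩ B) = 0
  · refine lintegral_congr_ae ((ae_restrict_iff' measurableSet_Iic).2 ?_)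
    exact (measure_eq_zero_iff_ae_notMem.1 hB).mono fun t ht ht0 => not_not.1 fun h => ht ⟨ht0, h⟩
  obtain ⟨t₀, ht₀0, ht₀⟩ := nonempty_of_measure_ne_zero hB
  have hB₀ : Iic 0 ∩ B = {t₀} :=
    (subsingleton_setOf_psiMinusRightLim_ne.anti inter_subset_right).eq_singleton_of_mem
      ⟨ht₀0, ht₀⟩
  rw [hB₀] at hB
  have hR : psiMinusRightLim μ n t₀ = ∞ :=
    iInf₂_eq_top.2 fun _ hz => psiMinus_eq_top_of_psiMinusRightLim_ne ht₀ hz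
  have hlhs : ∫⁻ t in Iic 0, psiMinusRightLim μ n t ∂n = ∞ := by
    refine top_unique (le_trans ?_ (lintegral_mono_set (singleton_subset_iff.2 ht₀0)))
    rw [lintegral_singleton, hR, ENNReal.top_mul hB]
  have hrhs : ∫⁻ t in Iic 0, psiMinus μ n (-t) ∂n = ∞ := by
    refine top_unique (le_trans ?_
      (lintegral_mono_set (Iio_subset_Iic_self.trans (Iic_subset_Iic.2 ht₀0))))
    rw [setLIntegral_congr_fun measurableSet_Iio fun t ht =>
        psiMinus_eq_top_of_psiMinusRightLim_ne ht₀ (neg_lt_neg ht),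
      setLIntegral_const, ENNReal.top_mul (measure_Iio_ne_zero_of_psiMinusRightLim_ne hnsupp ht₀)]
  rw [hlhs, hrhs]

lemma setLIntegral_psiMinus_neg_eq [IsFiniteMeasure μ] [SFinite (n.restrict (Iic 0))] :
    ∫⁻ t in Iic 0, psiMinus μ n (-t) ∂n =
      ∫⁻ s in Iic 0, n (Iic s) * psiMinusIntegrand μ n s ∂μ := by
  set ν := (μ.restrict (Iic 0)).withDensity (psiMinusIntegrand μ n)
  have hψ : ∀ t, psiMinus μ n (-t) = ν (Ici t) := fun t => by
    rw [withDensity_apply _ measurableSet_Ici, Measure.restrict_restrict measurableSet_Ici,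
      psiMinus, neg_neg, Ici_inter_Iic]
  have hn : ∀ s ∈ Iic (0 : ℝ), n.restrict (Iic 0) (Iic s) = n (Iic s) := fun s hs => by
    rw [Measure.restrict_apply measurableSet_Iic, Iic_inter_Iic, min_eq_left hs]
  have hmono : Monotone fun s => n.restrict (Iic 0) (Iic s) :=
    fun _ _ h => measure_mono (Iic_subset_Iic.2 h)
  simp only [hψ]
  rw [lintegral_measure_Ici_eq_lintegral_measure_Iic,
    lintegral_withDensity_eq_lintegral_mul _ measurable_psiMinusIntegrand hmono.measurable]
  exact setLIntegral_congr_fun measurableSet_Iic fun s hs => by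
    rw [Pi.mul_apply, hn s hs, mul_comm]

lemma setLIntegral_Iio_mul_psiMinusIntegrand (hnfin : ∀ s < 0, n (Iic s) < ∞)
    (hnsupp : ∀ x ∈ measSupport μ, 0 < n (Iic x)) :
    ∫⁻ s in Iio 0, n (Iic s) * psiMinusIntegrand μ n s ∂μ =
      ∫⁻ s in Iio 0,
        (ENNReal.ofReal (1 + mubarDinv μ n (Gmu μ n s) - (μ (Ici s)).toReal))⁻¹ ∂μ := by
  refine setLIntegral_congr_fun_ae measurableSet_Iio ?_
  filter_upwards [mem_ae_iff.2 (measure_compl_measSupport μ)] with s hs hs0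
  have h0 : n (Iic s) ≠ 0 := (hnsupp s hs).ne'
  have htop : n (Iic s) ≠ ∞ := (hnfin s hs0).ne
  rw [psiMinusIntegrand, ENNReal.mul_inv (Or.inl h0) (Or.inl htop),
    ENNReal.mul_inv_cancel_left h0 htop]

end NegativeSide

theorem changeOfVariablesNegativeSide_general
    (μ n : MeasureTheory.Measure ℝ) [MeasureTheory.IsProbabilityMeasure μ]
    (hatomless : ∀ x : ℝ, μ {x} = 0)
    (hnfin : ∀ s : ℝ, 0 < s → n (Set.Ici s) < ⊤ ∧ n (Set.Iic (-s)) < ⊤)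
    (hnsupp : ∀ x ∈ measSupport μ, 0 < n (Set.Iic x) ∧ 0 < n (Set.Ici x))
    :
    (∫⁻ s in Set.Ioi (0 : ℝ), nPhiMinus μ n s) =
      ∫⁻ s in Set.Iio (0 : ℝ),
        (ENNReal.ofReal (1 + mubarDinv μ n (Gmu μ n s) - (μ (Set.Ici s)).toReal))⁻¹ ∂μ := by
  have hnfin' : ∀ s < 0, n (Iic s) < ∞ := fun s hs => by
    simpa using (hnfin (-s) (neg_pos.2 hs)).2
  have hnsupp' : ∀ x ∈ measSupport μ, 0 < n (Iic x) := fun x hx => (hnsupp x hx).1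
  have := sFinite_restrict_Iic_zero hnfin'
  calc ∫⁻ s in Ioi 0, nPhiMinus μ n s
      = ∫⁻ t in Iic 0, psiMinusRightLim μ n t ∂n := lintegral_nPhiMinus_eq
    _ = ∫⁻ t in Iic 0, psiMinus μ n (-t) ∂n := setLIntegral_psiMinusRightLim_eq hnsupp'
    _ = ∫⁻ s in Iic 0, n (Iic s) * psiMinusIntegrand μ n s ∂μ := setLIntegral_psiMinus_neg_eq
    _ = ∫⁻ s in Iio 0, n (Iic s) * psiMinusIntegrand μ n s ∂μ :=
        setLIntegral_congr (Iio_ae_eq_Iic' (hatomless 0)).symm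
    _ = _ := setLIntegral_Iio_mul_psiMinusIntegrand hnfin' hnsupp'

/-- Change of variables for the negative side:
`∫₀^∞ n((−∞,−φ₋(s)]) ds = ∫_{(−∞,0)} (1 + μ̄(D_μ⁻¹(G_μ(s))) − μ̄(s))⁻¹ dμ(s)`
(equality in `[0,∞]`). -/
theorem changeOfVariablesNegativeSide
    (μ n : MeasureTheory.Measure ℝ) [MeasureTheory.IsProbabilityMeasure μ]
    (hatomless : ∀ x : ℝ, μ {x} = 0)
    (hneg : 0 < μ (Set.Iio (0 : ℝ))) (hpos : 0 < μ (Set.Ioi (0 : ℝ)))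
    (hnfin : ∀ s : ℝ, 0 < s → n (Set.Ici s) < ⊤ ∧ n (Set.Iic (-s)) < ⊤)
    (hnsupp : ∀ x ∈ measSupport μ, 0 < n (Set.Iic x) ∧ 0 < n (Set.Ici x))
    (hcompat : (⨆ y : ℝ, Dmu μ n y) = (⨆ x : ℝ, Gmu μ n x))
    :
    (∫⁻ s in Set.Ioi (0 : ℝ), nPhiMinus μ n s) =
      ∫⁻ s in Set.Iio (0 : ℝ),
        (ENNReal.ofReal (1 + mubarDinv μ n (Gmu μ n s) - (μ (Set.Ici s)).toReal))⁻¹ ∂μ :=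
  changeOfVariablesNegativeSide_general μ n hatomless hnfin hnsupp
end
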